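/- arXiv:1901.09206 — 2 statements merged into one kernel-verified Lean document; each statement's English description precedes it below -/
import Mathlib

section
/- Let P = w·N(0,1) + (1−w)·N(0, σ_q²) and Q = N(0,1), with Gaussian kernel of bandwidth σ² > 0. Then MMD²(P,Q) = (1−w)² [ c(2) + c(2σ_q²) − 2c(1+σ_q²) ], where c(z) := √(σ²/(σ²+z)). -/
/-!
Averaging the Gaussian kernel `exp (-(x - y)² / (2t))` against `N(m, v)` completes a square and
gives `√(t / (t + v))` times a Gaussian bump of variance `t + v`; averaging once more shows that
the double integral of the kernel against `N(0, a) ⊗ N(0, b)` is `c (a + b)`. The double integral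
is bilinear in mixtures of finite measures, so MMD² expands into such terms, and the parts carrying
the weight `w` cancel because `P` and `Q` share the component `N(0, 1)`.
-/

open Real MeasureTheory ProbabilityTheory
open scoped NNReal

theorem integral_smul_add_smul_measure {X : Type*} [MeasurableSpace X] {μ ν : Measure X}
    {f : X → ℝ} (hμ : Integrable f μ) (hν : Integrable f ν) (a b : ℝ≥0) :
    ∫ x, f x ∂(a • μ + b • ν) = a * ∫ x, f x ∂μ + b * ∫ x, f x ∂ν := by
  rw [integral_add_measure hμ.smul_measure_nnreal hν.smul_measure_nnreal,
    integral_smul_nnreal_measure, integral_smul_nnreal_measure, NNReal.smul_def, NNReal.smul_def,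
    smul_eq_mul, smul_eq_mul]

section KernelPairing

variable {X : Type*} [MeasurableSpace X] {k : X → X → ℝ} {C : ℝ}

noncomputable def kernelPairing (k : X → X → ℝ) (μ ν : Measure X) : ℝ := ∫ x, ∫ y, k x y ∂ν ∂μ

theorem integrable_kernel_right (hk : Measurable (Function.uncurry k)) (hC : ∀ x y, ‖k x y‖ ≤ C)
    (x : X) (ν : Measure X) [IsFiniteMeasure ν] : Integrable (k x) ν :=
  .of_bound (hk.comp measurable_prodMk_left).aestronglyMeasurable C (.of_forall (hC x))

theorem integrable_integral_kernel (hk : Measurable (Function.uncurry k))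
    (hC : ∀ x y, ‖k x y‖ ≤ C) (μ ν : Measure X) [IsFiniteMeasure μ] [IsFiniteMeasure ν] :
    Integrable (fun x ↦ ∫ y, k x y ∂ν) μ :=
  .of_bound hk.stronglyMeasurable.integral_prod_right.aestronglyMeasurable (ν.real .univ * C)
    (.of_forall fun x ↦ by
      simpa [mul_comm] using norm_integral_le_of_norm_le_const (.of_forall (hC x)))

theorem kernelPairing_smul_add_smul_left (hk : Measurable (Function.uncurry k))
    (hC : ∀ x y, ‖k x y‖ ≤ C) (μ₁ μ₂ ν : Measure X) [IsFiniteMeasure μ₁] [IsFiniteMeasure μ₂]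
    [IsFiniteMeasure ν] (a b : ℝ≥0) :
    kernelPairing k (a • μ₁ + b • μ₂) ν = a * kernelPairing k μ₁ ν + b * kernelPairing k μ₂ ν :=
  integral_smul_add_smul_measure (integrable_integral_kernel hk hC μ₁ ν)
    (integrable_integral_kernel hk hC μ₂ ν) a b

theorem kernelPairing_smul_add_smul_right (hk : Measurable (Function.uncurry k))
    (hC : ∀ x y, ‖k x y‖ ≤ C) (μ ν₁ ν₂ : Measure X) [IsFiniteMeasure μ] [IsFiniteMeasure ν₁]
    [IsFiniteMeasure ν₂] (a b : ℝ≥0) :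
    kernelPairing k μ (a • ν₁ + b • ν₂) = a * kernelPairing k μ ν₁ + b * kernelPairing k μ ν₂ := by
  simp only [kernelPairing, integral_smul_add_smul_measure (integrable_kernel_right hk hC _ ν₁)
    (integrable_kernel_right hk hC _ ν₂)]
  rw [integral_add ((integrable_integral_kernel hk hC μ ν₁).const_mul _)
    ((integrable_integral_kernel hk hC μ ν₂).const_mul _), integral_const_mul, integral_const_mul]

end KernelPairing

theorem integral_exp_neg_sq_sub_div_gaussianReal {t : ℝ} (ht : 0 < t) (m : ℝ) (v : ℝ≥0) (x : ℝ) :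
    ∫ y, exp (-(x - y) ^ 2 / (2 * t)) ∂gaussianReal m v =
      √(t / (t + v)) * exp (-(x - m) ^ 2 / (2 * (t + v))) := by
  rcases eq_or_ne v 0 with rfl | hv
  · simp [gaussianReal_zero_var, ht.ne']
  have hv0 : (0 : ℝ) < v := by positivity
  set s : ℝ := t + v
  have hs : 0 < s := by positivity
  have hsquare : ∀ y, gaussianPDFReal m v y • exp (-(x - y) ^ 2 / (2 * t)) =
      (√(2 * π * v))⁻¹ * (exp (-(s / (2 * t * v)) * (y - (v * x + t * m) / s) ^ 2) *
        exp (-(x - m) ^ 2 / (2 * s))) := by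
    intro y
    rw [gaussianPDFReal, smul_eq_mul, mul_assoc, ← exp_add, ← exp_add]
    congr 2
    field_simp
    ring
  have hshift : ∫ y, exp (-(s / (2 * t * v)) * (y - (v * x + t * m) / s) ^ 2) =
      √(π / (s / (2 * t * v))) :=
    (integral_sub_right_eq_self (fun z ↦ exp (-(s / (2 * t * v)) * z ^ 2)) _).trans
      (integral_gaussian _)
  rw [integral_gaussianReal_eq_integral_smul hv]
  simp_rw [hsquare]
  rw [integral_const_mul, integral_mul_const, hshift, ← mul_assoc, ← sqrt_inv,
    ← sqrt_mul (by positivity)]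
  congr 2
  field_simp

theorem kernelPairing_gaussianReal {t : ℝ} (ht : 0 < t) (m₁ m₂ : ℝ) (v₁ v₂ : ℝ≥0) :
    kernelPairing (fun x y ↦ exp (-(x - y) ^ 2 / (2 * t))) (gaussianReal m₁ v₁)
      (gaussianReal m₂ v₂) = √(t / (t + v₁ + v₂)) * exp (-(m₁ - m₂) ^ 2 / (2 * (t + v₁ + v₂))) := by
  have htv : 0 < t + v₂ := by positivity
  have hsqrt : √(t / (t + v₂)) * √((t + v₂) / (t + v₂ + v₁)) = √(t / (t + v₁ + v₂)) := by
    rw [← sqrt_mul (by positivity)]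
    congr 1
    field_simp
    ring
  simp only [kernelPairing, integral_exp_neg_sq_sub_div_gaussianReal ht, integral_const_mul]
  simp_rw [← neg_sq (_ - m₂), neg_sub]
  rw [integral_exp_neg_sq_sub_div_gaussianReal htv, ← mul_assoc, hsqrt]
  congr 4
  ring

theorem spiky_gaussian_mmd_general (w σq σ : ℝ) (hw0 : 0 ≤ w) (hw1 : w ≤ 1)
    (hσ : 0 < σ)
    (P : Measure ℝ)
    (hP : P = w.toNNReal • gaussianReal 0 1 +
      (1 - w).toNNReal • gaussianReal 0 ⟨σq ^ 2, sq_nonneg σq⟩)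
    (Q : Measure ℝ) (hQ : Q = gaussianReal 0 1)
    (c : ℝ → ℝ) (hc : ∀ z, c z = Real.sqrt (σ ^ 2 / (σ ^ 2 + z))) :
    (∫ x, ∫ y, Real.exp (-(x - y) ^ 2 / (2 * σ ^ 2)) ∂P ∂P) +
      (∫ x, ∫ y, Real.exp (-(x - y) ^ 2 / (2 * σ ^ 2)) ∂Q ∂Q) -
      2 * ∫ x, ∫ y, Real.exp (-(x - y) ^ 2 / (2 * σ ^ 2)) ∂Q ∂P =
    (1 - w) ^ 2 * (c 2 + c (2 * σq ^ 2) - 2 * c (1 + σq ^ 2)) := by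
  set k : ℝ → ℝ → ℝ := fun x y ↦ exp (-(x - y) ^ 2 / (2 * σ ^ 2))
  have hk : Measurable (Function.uncurry k) := by fun_prop
  have hk_le : ∀ x y, ‖k x y‖ ≤ 1 := fun x y ↦ by
    rw [norm_of_nonneg (exp_pos _).le, exp_le_one_iff]
    exact div_nonpos_of_nonpos_of_nonneg (neg_nonpos.2 (sq_nonneg _)) (by positivity)
  have hpair : ∀ a b : ℝ≥0, kernelPairing k (gaussianReal 0 a) (gaussianReal 0 b) = c (a + b) :=
    fun a b ↦ by simp [k, kernelPairing_gaussianReal (pow_pos hσ 2), hc, add_assoc]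
  -- `⟨σq ^ 2, _⟩` is elaborated at type `{r // 0 ≤ r}`, which blocks instance search on `P`
  obtain ⟨q, hq, rfl⟩ : ∃ q : ℝ≥0, (q : ℝ) = σq ^ 2 ∧
      P = w.toNNReal • gaussianReal 0 1 + (1 - w).toNNReal • gaussianReal 0 q := ⟨_, rfl, hP⟩
  change kernelPairing k _ _ + kernelPairing k Q Q - 2 * kernelPairing k _ Q = _
  subst hQ
  simp only [kernelPairing_smul_add_smul_left hk hk_le, kernelPairing_smul_add_smul_right hk hk_le,
    hpair, coe_toNNReal _ hw0, coe_toNNReal _ (sub_nonneg.2 hw1), NNReal.coe_one, hq]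
  ring_nf

theorem spiky_gaussian_mmd (w σq σ : ℝ) (hw0 : 0 ≤ w) (hw1 : w ≤ 1) (hσq : 0 < σq)
    (hσ : 0 < σ)
    (P : Measure ℝ)
    (hP : P = w.toNNReal • gaussianReal 0 1 +
      (1 - w).toNNReal • gaussianReal 0 ⟨σq ^ 2, sq_nonneg σq⟩)
    (Q : Measure ℝ) (hQ : Q = gaussianReal 0 1)
    (c : ℝ → ℝ) (hc : ∀ z, c z = Real.sqrt (σ ^ 2 / (σ ^ 2 + z))) :
    (∫ x, ∫ y, Real.exp (-(x - y) ^ 2 / (2 * σ ^ 2)) ∂P ∂P) +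
      (∫ x, ∫ y, Real.exp (-(x - y) ^ 2 / (2 * σ ^ 2)) ∂Q ∂Q) -
      2 * ∫ x, ∫ y, Real.exp (-(x - y) ^ 2 / (2 * σ ^ 2)) ∂Q ∂P =
    (1 - w) ^ 2 * (c 2 + c (2 * σq ^ 2) - 2 * c (1 + σq ^ 2)) :=
  spiky_gaussian_mmd_general w σq σ hw0 hw1 hσ P hP Q hQ c hc
end

section
/- For a translation-invariant kernel k(x, x') = ψ(x − x') on ℝ^d with ψ the Fourier transform of a finite nonnegative measure Λ (Bochner), and probability measures P, Q with characteristic functions φ_P, φ_Q, the MMD satisfies MMD²(P,Q) = ∫_{ℝ^d} |φ_P(ω) − φ_Q(ω)|² dΛ(ω). -/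
/-!
Writing `cos ⟪ω, x - y⟫ = Re (e^{i⟪x, ω⟫} · conj e^{i⟪y, ω⟫})` and exchanging the order of
integration (all integrands are bounded and all measures finite), each cross term
`∫∫ ψ (x - y) dν(y) dμ(x)` becomes `∫ Re (φ_μ · conj φ_ν) dΛ`. The MMD is then the integral of
`‖φ_P‖² + ‖φ_Q‖² - 2 Re (φ_P · conj φ_Q) = ‖φ_P - φ_Q‖²`.
-/

open MeasureTheory Complex RealInnerProductSpace ComplexConjugate

lemma Real.cos_inner_sub_eq_re_mul_conj {E : Type*} [NormedAddCommGroup E]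
    [InnerProductSpace ℝ E] (ω x y : E) :
    Real.cos ⟪ω, x - y⟫ = (cexp (⟪x, ω⟫ * I) * conj (cexp (⟪y, ω⟫ * I))).re := by
  rw [← exp_conj, ← Complex.exp_add, map_mul, conj_I, conj_ofReal, ← exp_ofReal_mul_I_re,
    inner_sub_right, real_inner_comm x, real_inner_comm y]
  push_cast
  ring_nf

section CharFunKernel

variable {E : Type*} [NormedAddCommGroup E] [InnerProductSpace ℝ E] [MeasurableSpace E]
  [BorelSpace E] [SecondCountableTopology E]

lemma integral_prod_cos_inner_sub (μ ν : Measure E) [IsFiniteMeasure μ] [IsFiniteMeasure ν]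
    (ω : E) :
    ∫ p, Real.cos ⟪ω, p.1 - p.2⟫ ∂(μ.prod ν) = (charFun μ ω * conj (charFun ν ω)).re := by
  have hint : Integrable (fun p : E × E => cexp (⟪p.1, ω⟫ * I) * conj (cexp (⟪p.2, ω⟫ * I)))
      (μ.prod ν) := by
    refine .of_bound (by fun_prop) 1 (.of_forall fun p => ?_)
    simp [norm_exp_ofReal_mul_I]
  simp_rw [Real.cos_inner_sub_eq_re_mul_conj]
  rw [← RCLike.re_eq_complex_re, integral_re hint,
    integral_prod_mul (fun x => cexp (⟪x, ω⟫ * I)) (fun y => conj (cexp (⟪y, ω⟫ * I))),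
    integral_conj]
  rfl

lemma integral_integral_integral_cos_inner_sub (Λ μ ν : Measure E) [IsFiniteMeasure Λ]
    [IsFiniteMeasure μ] [IsFiniteMeasure ν] :
    ∫ x, ∫ y, (∫ ω, Real.cos ⟪ω, x - y⟫ ∂Λ) ∂ν ∂μ
      = ∫ ω, (charFun μ ω * conj (charFun ν ω)).re ∂Λ := by
  have hint : Integrable (fun q : (E × E) × E => Real.cos ⟪q.2, q.1.1 - q.1.2⟫)
      ((μ.prod ν).prod Λ) :=
    .of_bound (by fun_prop) 1 (.of_forall fun _ => Real.abs_cos_le_one _)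
  calc ∫ x, ∫ y, (∫ ω, Real.cos ⟪ω, x - y⟫ ∂Λ) ∂ν ∂μ
      = ∫ p, ∫ ω, Real.cos ⟪ω, p.1 - p.2⟫ ∂Λ ∂(μ.prod ν) :=
        (integral_prod _ hint.integral_prod_left).symm
    _ = ∫ ω, ∫ p, Real.cos ⟪ω, p.1 - p.2⟫ ∂(μ.prod ν) ∂Λ := integral_integral_swap hint
    _ = ∫ ω, (charFun μ ω * conj (charFun ν ω)).re ∂Λ := by
        simp_rw [integral_prod_cos_inner_sub]

lemma integrable_re_charFun_mul_conj (Λ μ ν : Measure E) [IsFiniteMeasure Λ]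
    [IsFiniteMeasure μ] [IsFiniteMeasure ν] :
    Integrable (fun ω => (charFun μ ω * conj (charFun ν ω)).re) Λ := by
  refine .of_bound (by fun_prop) (μ.real Set.univ * ν.real Set.univ) (.of_forall fun ω => ?_)
  calc ‖(charFun μ ω * conj (charFun ν ω)).re‖
      ≤ ‖charFun μ ω * conj (charFun ν ω)‖ := abs_re_le_norm _
    _ ≤ μ.real Set.univ * ν.real Set.univ := by
        rw [norm_mul, RCLike.norm_conj]
        exact mul_le_mul (norm_charFun_le ω) (norm_charFun_le ω) (norm_nonneg _) (by positivity)

end CharFunKernel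

lemma Complex.norm_sub_sq_eq_re_mul_conj (a b : ℂ) :
    ‖a - b‖ ^ 2 = (a * conj a).re + (b * conj b).re - 2 * (a * conj b).re := by
  simp only [Complex.sq_norm, normSq_apply, mul_re, conj_re, conj_im, sub_re, sub_im]
  ring

theorem mmd_spectral (d : ℕ) (P Q Λ : Measure (EuclideanSpace ℝ (Fin d)))
    [IsProbabilityMeasure P] [IsProbabilityMeasure Q] [IsFiniteMeasure Λ]
    (ψ : EuclideanSpace ℝ (Fin d) → ℝ)
    (hψ : ∀ x, ψ x = ∫ ω, Real.cos (⟪ω, x⟫) ∂Λ)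
    (φP φQ : EuclideanSpace ℝ (Fin d) → ℂ)
    (hφP : ∀ ω, φP ω = ∫ x, Complex.exp ((⟪ω, x⟫ : ℂ) * Complex.I) ∂P)
    (hφQ : ∀ ω, φQ ω = ∫ y, Complex.exp ((⟪ω, y⟫ : ℂ) * Complex.I) ∂Q) :
    (∫ x, ∫ y, ψ (x - y) ∂P ∂P) + (∫ x, ∫ y, ψ (x - y) ∂Q ∂Q) -
      2 * ∫ x, ∫ y, ψ (x - y) ∂Q ∂P =
    ∫ ω, ‖φP ω - φQ ω‖ ^ 2 ∂Λ := by
  have hP : φP = charFun P := funext fun ω => by simp_rw [hφP, charFun_apply, real_inner_comm]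
  have hQ : φQ = charFun Q := funext fun ω => by simp_rw [hφQ, charFun_apply, real_inner_comm]
  simp only [hψ, integral_integral_integral_cos_inner_sub, hP, hQ,
    Complex.norm_sub_sq_eq_re_mul_conj]
  have hPP := integrable_re_charFun_mul_conj Λ P P
  have hQQ := integrable_re_charFun_mul_conj Λ Q Q
  have hPQ := integrable_re_charFun_mul_conj Λ P Q
  rw [integral_sub (by exact hPP.add hQQ) (hPQ.const_mul 2), integral_add hPP hQQ,
    integral_const_mul]
end
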